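/- Let q : [0,h] → ℝ be continuously differentiable with q(0) = 0 and q(h) = 0. Then ∫₀ʰ |q(t)| dt ≤ (h/2) ∫₀ʰ |q'(t)| dt. -/

import Mathlib

/-!
If `q` vanishes at both ends of `[0, h]`, then for every `t` the value `q t` is the integral of `q'`
over `[0, t]` and, up to sign, over `[t, h]`. Hence `|q t|` is bounded by both `∫₀ᵗ |q'|` and
`∫ₜʰ |q'|`, whose sum is `∫₀ʰ |q'|`; so `|q t| ≤ ½ ∫₀ʰ |q'|`, and integrating over `[0, h]` gives
the claim.
-/

open Set MeasureTheory intervalIntegral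

variable {E : Type*} [NormedAddCommGroup E] [NormedSpace ℝ E] [CompleteSpace E]
  {f f' : ℝ → E} {a b : ℝ}

theorem norm_sub_le_integral_norm_deriv (hab : a ≤ b)
    (hf : ∀ t ∈ Icc a b, HasDerivAt f (f' t) t) (hf' : IntervalIntegrable f' volume a b) :
    ‖f b - f a‖ ≤ ∫ t in a..b, ‖f' t‖ := by
  rw [← integral_eq_sub_of_hasDerivAt (fun t ht => hf t (uIcc_of_le hab ▸ ht)) hf']
  exact norm_integral_le_integral_norm hab

theorem norm_le_half_integral_norm_deriv_of_eq_zero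
    (hf : ∀ t ∈ Icc a b, HasDerivAt f (f' t) t) (hf' : IntervalIntegrable f' volume a b)
    (ha : f a = 0) (hb : f b = 0) {t : ℝ} (ht : t ∈ Icc a b) :
    ‖f t‖ ≤ (1 / 2) * ∫ s in a..b, ‖f' s‖ := by
  have htab : t ∈ uIcc a b := Icc_subset_uIcc ht
  obtain ⟨hat, htb⟩ := ht
  have hleft : ‖f t‖ ≤ ∫ s in a..t, ‖f' s‖ := by
    simpa [ha] using norm_sub_le_integral_norm_deriv hat
      (fun s hs => hf s ⟨hs.1, hs.2.trans htb⟩) (hf'.mono_set (uIcc_subset_uIcc_left htab))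
  have hright : ‖f t‖ ≤ ∫ s in t..b, ‖f' s‖ := by
    simpa [hb] using norm_sub_le_integral_norm_deriv htb
      (fun s hs => hf s ⟨hat.trans hs.1, hs.2⟩) (hf'.mono_set (uIcc_subset_uIcc_right htab))
  have hsplit : (∫ s in a..t, ‖f' s‖) + (∫ s in t..b, ‖f' s‖) = ∫ s in a..b, ‖f' s‖ :=
    integral_add_adjacent_intervals
      (hf'.norm.mono_set (uIcc_subset_uIcc_left htab))
      (hf'.norm.mono_set (uIcc_subset_uIcc_right htab))
  linarith

theorem integral_norm_le_half_mul_integral_norm_deriv_of_eq_zero (hab : a ≤ b)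
    (hf : ∀ t ∈ Icc a b, HasDerivAt f (f' t) t) (hf' : IntervalIntegrable f' volume a b)
    (ha : f a = 0) (hb : f b = 0) :
    (∫ t in a..b, ‖f t‖) ≤ ((b - a) / 2) * ∫ t in a..b, ‖f' t‖ := by
  have hcont : ContinuousOn f (uIcc a b) := fun t ht =>
    (hf t (uIcc_of_le hab ▸ ht)).continuousAt.continuousWithinAt
  calc (∫ t in a..b, ‖f t‖)
      ≤ ∫ _ in a..b, (1 / 2) * ∫ s in a..b, ‖f' s‖ :=
        integral_mono_on hab hcont.norm.intervalIntegrable intervalIntegrable_const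
          fun t ht => norm_le_half_integral_norm_deriv_of_eq_zero hf hf' ha hb ht
    _ = ((b - a) / 2) * ∫ t in a..b, ‖f' t‖ := by
        rw [intervalIntegral.integral_const, smul_eq_mul]; ring

theorem stmt_1 (h : ℝ) (hh : 0 < h) (q q' : ℝ → ℝ)
    (hderiv : ∀ t ∈ Set.Icc 0 h, HasDerivAt q (q' t) t)
    (hcont : ContinuousOn q' (Set.Icc 0 h))
    (h0 : q 0 = 0) (hh0 : q h = 0) :
    (∫ t in (0:ℝ)..h, |q t|) ≤ (h / 2) * ∫ t in (0:ℝ)..h, |q' t| := by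
  have hq' : IntervalIntegrable q' volume 0 h :=
    (uIcc_of_le hh.le ▸ hcont).intervalIntegrable
  simpa using integral_norm_le_half_mul_integral_norm_deriv_of_eq_zero hh.le hderiv hq' h0 hh0
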